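/- The function f(ρ;1) = (7 - 15ρ^2)/(5ρ^2 + 3)^3 is a solution on (0,1) of the ODE (1-ρ^2) f'' + (6/ρ - 8ρ) f' - (12 - 48(21 - 5ρ^2)/(5ρ^2 + 3)^2) f = 0 (i.e. equation (4.2) with λ = 1). -/

import Mathlib

/-! The eigenfunction is an explicit rational function of `ρ` whose denominator `5ρ² + 3` never
vanishes, so both derivatives are computed by the quotient rule, and the ODE reduces, after
clearing the denominators `ρ (5ρ² + 3)⁵`, to a polynomial identity. -/

theorem HasDerivAt.div_pow_succ {p q : ℝ → ℝ} {p' q' x : ℝ} (hp : HasDerivAt p p' x)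
    (hq : HasDerivAt q q' x) (hqx : q x ≠ 0) (n : ℕ) :
    HasDerivAt (fun y => p y / q y ^ (n + 1))
      ((p' * q x - (n + 1) * p x * q') / q x ^ (n + 2)) x := by
  refine (hp.div (hq.fun_pow (n + 1)) (pow_ne_zero _ hqx)).congr_deriv ?_
  field_simp
  push_cast
  ring

theorem hasDerivAt_five_sq_add_three (x : ℝ) :
    HasDerivAt (fun y : ℝ => 5 * y ^ 2 + 3) (10 * x) x :=
  (((hasDerivAt_pow 2 x).const_mul 5).add_const 3).congr_deriv (by ring)

theorem hasDerivAt_eigenfunction (x : ℝ) :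
    HasDerivAt (fun ρ : ℝ => (7 - 15 * ρ ^ 2) / (5 * ρ ^ 2 + 3) ^ 3)
      (-300 * x * (1 - x ^ 2) / (5 * x ^ 2 + 3) ^ 4) x := by
  have hnum : HasDerivAt (fun ρ : ℝ => 7 - 15 * ρ ^ 2) (-30 * x) x :=
    (((hasDerivAt_pow 2 x).const_mul 15).const_sub 7).congr_deriv (by ring)
  refine (hnum.div_pow_succ (hasDerivAt_five_sq_add_three x) (by positivity) 2).congr_deriv ?_
  norm_num
  ring

theorem hasDerivAt_deriv_eigenfunction (x : ℝ) :
    HasDerivAt (fun ρ : ℝ => -300 * ρ * (1 - ρ ^ 2) / (5 * ρ ^ 2 + 3) ^ 4)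
      ((-7500 * x ^ 4 + 13200 * x ^ 2 - 900) / (5 * x ^ 2 + 3) ^ 5) x := by
  have hnum : HasDerivAt (fun ρ : ℝ => -300 * ρ * (1 - ρ ^ 2)) (-300 + 900 * x ^ 2) x := by
    have := ((hasDerivAt_id x).const_mul (-300)).mul ((hasDerivAt_pow 2 x).const_sub 1)
    simp only [id] at this
    exact this.congr_deriv (by ring)
  refine (hnum.div_pow_succ (hasDerivAt_five_sq_add_three x) (by positivity) 3).congr_deriv ?_
  field_simp
  ring

theorem eigenfunction_lambda_one (f : ℝ → ℝ)
    (hf : ∀ ρ : ℝ, f ρ = (7 - 15 * ρ ^ 2) / (5 * ρ ^ 2 + 3) ^ 3) :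
    ∀ ρ ∈ Set.Ioo (0 : ℝ) 1,
      (1 - ρ ^ 2) * deriv (deriv f) ρ + (6 / ρ - 8 * ρ) * deriv f ρ
        - (12 - 48 * (21 - 5 * ρ ^ 2) / (5 * ρ ^ 2 + 3) ^ 2) * f ρ = 0 := by
  obtain rfl : f = fun ρ => (7 - 15 * ρ ^ 2) / (5 * ρ ^ 2 + 3) ^ 3 := funext hf
  have hf' : deriv (fun ρ : ℝ => (7 - 15 * ρ ^ 2) / (5 * ρ ^ 2 + 3) ^ 3) =
      fun x => -300 * x * (1 - x ^ 2) / (5 * x ^ 2 + 3) ^ 4 :=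
    funext fun x => (hasDerivAt_eigenfunction x).deriv
  intro ρ hρ
  have hρ0 : ρ ≠ 0 := hρ.1.ne'
  rw [hf', (hasDerivAt_deriv_eigenfunction ρ).deriv]
  field_simp
  ring
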